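/- For t ≤ l ≤ v - t, the ℤ-module N_{tl}(v) of null designs (ℤ-valued functions c on l-subsets of {1,...,v} with Σ_{x ⊇ y} c(x) = 0 for every subset y of size ≤ t) is free of rank C(v, l) - C(v, t). -/

import Mathlib

/-!
Null designs are the kernel of the inclusion matrix `W_{tl}` of `t`-subsets versus `l`-subsets;
the conditions for `s < t` follow from the one for `t` because
`W_{st} W_{tl} = C(l-s, t-s) W_{sl}`. A submodule of `ℤ^n` is free, and the kernel of an integer
matrix `W` has rank `#columns - #rows` as soon as `W Wᵀ` is nonsingular, since then
`W (Wᵀ adj(W Wᵀ)) = det(W Wᵀ) • 1`. Nonsingularity comes from Wilson's identity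
`W_{tl} W_{tl}ᵀ = ∑ᵢ C(v-2t, v-l-i) W_{it}ᵀ W_{it}`: its `i = t` term is a positive multiple of
`W_{tt}ᵀ W_{tt} = 1` and the others are positive semidefinite. Entrywise, `(W Wᵀ)_{zz'}` counts
the `(v-l)`-subsets of the complement of `z ∪ z'`, a set of size `(v-2t) + #(z ∩ z')`, so the
identity is Vandermonde's.
-/

open Finset Matrix Module

lemma sum_boole_card_eq {R α : Type*} [AddCommMonoidWithOne R] [Fintype α] (l : ℕ)
    (p : Finset α → Prop) [DecidablePred p] :
    ∑ x : {x : Finset α // #x = l}, (if p x.1 then 1 else 0 : R) =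
      #{x ∈ powersetCard l univ | p x} := by
  rw [← sum_subtype _ (fun _ => mem_powersetCard_univ) (fun x => if p x then (1 : R) else 0),
    sum_boole]

section Counting

variable {α : Type*} [Fintype α] [DecidableEq α]

/-- Stated with `card α - k` rather than `k - #w`, so that it also covers `k < #w`. -/
lemma card_filter_powersetCard_univ_superset {k : ℕ} (hk : k ≤ Fintype.card α) (w : Finset α) :
    #{x ∈ powersetCard k univ | w ⊆ x} = (Fintype.card α - #w).choose (Fintype.card α - k) := by
  by_cases hw : #w ≤ k
  · rw [card_filter_powersetCard_subset _ _ _ (subset_univ w) hw, card_univ,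
      ← Nat.choose_symm (by omega)]
    congr 1
    omega
  · rw [Nat.choose_eq_zero_of_lt (by have := card_le_univ w; omega), card_eq_zero,
      filter_eq_empty_iff]
    intro x hx hwx
    exact hw (mem_powersetCard_univ.mp hx ▸ card_le_card hwx)

lemma card_filter_powersetCard_univ_subset (i : ℕ) (u : Finset α) :
    #{y ∈ powersetCard i univ | y ⊆ u} = (#u).choose i := by
  rw [← card_powersetCard]
  congr 1
  ext y
  simp [mem_powersetCard, and_comm]

end Counting

lemma Nat.add_choose_eq_sum_range (n m r : ℕ) :
    (n + m).choose r = ∑ i ∈ range (r + 1), n.choose (r - i) * m.choose i := by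
  rw [add_comm, Nat.add_choose_eq, Nat.sum_antidiagonal_eq_sum_range_succ_mk]
  exact sum_congr rfl fun i _ => mul_comm _ _

section Rank

variable {R m n : Type*} [CommRing R] [Fintype m] [Fintype n]

lemma Matrix.dotProduct_mulVec_smul_transpose_mul_self (a : R) (B : Matrix m n R) (u : n → R) :
    u ⬝ᵥ ((a • (Bᵀ * B)) *ᵥ u) = a * ((B *ᵥ u) ⬝ᵥ (B *ᵥ u)) := by
  rw [smul_mulVec, dotProduct_smul, ← mulVec_mulVec, dotProduct_mulVec, vecMul_transpose,
    smul_eq_mul]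

variable [IsDomain R] [DecidableEq m]

lemma Matrix.finrank_range_mulVecLin_of_mul_eq_smul_one (A : Matrix m n R) {B : Matrix n m R}
    {d : R} (hd : d ≠ 0) (hAB : A * B = d • 1) :
    finrank R (LinearMap.range A.mulVecLin) = Fintype.card m := by
  refine le_antisymm ((Submodule.finrank_le _).trans_eq (finrank_fintype_fun_eq_card R)) ?_
  have hinj : Function.Injective (A * B).mulVecLin := by
    intro u w huw
    simp only [mulVecLin_apply, hAB, smul_mulVec, one_mulVec] at huw
    exact smul_right_injective _ hd huw
  calc Fintype.card m = finrank R (LinearMap.range (A * B).mulVecLin) := by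
        rw [LinearMap.finrank_range_of_inj hinj, finrank_fintype_fun_eq_card]
    _ ≤ finrank R (LinearMap.range A.mulVecLin) := by
        rw [mulVecLin_mul]
        exact Submodule.finrank_mono (LinearMap.range_comp_le_range _ _)

lemma Matrix.finrank_ker_mulVecLin_of_det_mul_transpose_ne_zero (A : Matrix m n R)
    (hA : (A * Aᵀ).det ≠ 0) :
    finrank R (LinearMap.ker A.mulVecLin) = Fintype.card n - Fintype.card m := by
  have hrange := A.finrank_range_mulVecLin_of_mul_eq_smul_one (B := Aᵀ * adjugate (A * Aᵀ)) hA
    (by rw [← Matrix.mul_assoc, mul_adjugate])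
  have hsum := (LinearMap.ker A.mulVecLin).finrank_quotient_add_finrank
  rw [A.mulVecLin.quotKerEquivRange.finrank_eq, hrange, finrank_fintype_fun_eq_card] at hsum
  omega

end Rank

section InclusionMatrix

variable (R : Type*) (α : Type*) [DecidableEq α]

def inclusionMatrix [Zero R] [One R] (s t : ℕ) :
    Matrix {y : Finset α // #y = s} {x : Finset α // #x = t} R :=
  of fun y x => if y.1 ⊆ x.1 then 1 else 0

variable {R α}

lemma inclusionMatrix_self [Zero R] [One R] (t : ℕ) : inclusionMatrix R α t t = 1 := by
  ext y x
  simp only [inclusionMatrix, of_apply, one_apply, Subtype.ext_iff]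
  exact if_congr ⟨fun h => eq_of_subset_of_card_le h (by rw [x.2, y.2]), fun h => h ▸ subset_rfl⟩
    rfl rfl

variable [Fintype α]

lemma inclusionMatrix_mulVec_apply [NonAssocSemiring R] {s t : ℕ}
    (c : {x : Finset α // #x = t} → R) (y : {y : Finset α // #y = s}) :
    (inclusionMatrix R α s t *ᵥ c) y = ∑ x, if y.1 ⊆ x.1 then c x else 0 := by
  simp [inclusionMatrix, mulVec, dotProduct]

lemma inclusionMatrix_mul_inclusionMatrix [NonAssocSemiring R] {s t : ℕ} (l : ℕ) (hst : s ≤ t) :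
    inclusionMatrix R α s t * inclusionMatrix R α t l =
      ((l - s).choose (t - s) : R) • inclusionMatrix R α s l := by
  ext ⟨y, rfl⟩ ⟨x, rfl⟩
  simp only [inclusionMatrix, mul_apply, of_apply, Matrix.smul_apply, smul_eq_mul, mul_boole,
    ← ite_and]
  rw [sum_boole_card_eq t (fun z => z ⊆ x ∧ y ⊆ z)]
  split_ifs with hyx
  · rw [← card_filter_powersetCard_subset _ _ _ hyx hst]
    congr 2
    ext z
    simp only [mem_filter, mem_powersetCard, subset_univ, true_and]
    tauto
  · rw [filter_false_of_mem fun z _ h => hyx (h.2.trans h.1), card_empty, Nat.cast_zero]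

lemma inclusionMatrix_mulVec_eq_zero_of_le [CommRing R] [IsDomain R] [CharZero R] {s t l : ℕ}
    (hst : s ≤ t) (htl : t ≤ l) {c : {x : Finset α // #x = l} → R}
    (hc : inclusionMatrix R α t l *ᵥ c = 0) : inclusionMatrix R α s l *ᵥ c = 0 := by
  have h : ((l - s).choose (t - s) : R) • (inclusionMatrix R α s l *ᵥ c) = 0 := by
    rw [← smul_mulVec, ← inclusionMatrix_mul_inclusionMatrix l hst, ← mulVec_mulVec, hc,
      mulVec_zero]
  exact (smul_eq_zero.mp h).resolve_left (Nat.cast_ne_zero.mpr (Nat.choose_pos (by omega)).ne')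

lemma inclusionMatrix_mul_transpose [CommSemiring R] {t k : ℕ} (h2t : 2 * t ≤ Fintype.card α)
    (hk : k ≤ Fintype.card α) :
    inclusionMatrix R α t k * (inclusionMatrix R α t k)ᵀ =
      ∑ i ∈ range (Fintype.card α - k + 1),
        ((Fintype.card α - 2 * t).choose (Fintype.card α - k - i) : R) •
          ((inclusionMatrix R α i t)ᵀ * inclusionMatrix R α i t) := by
  ext z z'
  simp only [inclusionMatrix, mul_apply, transpose_apply, of_apply, Matrix.sum_apply,
    Matrix.smul_apply, smul_eq_mul, mul_boole, ← ite_and]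
  simp_rw [← union_subset_iff]
  have hunion : Fintype.card α - #(z'.1 ∪ z.1) = (Fintype.card α - 2 * t) + #(z'.1 ∩ z.1) := by
    have := card_union_add_card_inter z'.1 z.1
    rw [z.2, z'.2] at this
    omega
  rw [sum_boole_card_eq k (fun x => z'.1 ∪ z.1 ⊆ x), card_filter_powersetCard_univ_superset hk,
    hunion, Nat.add_choose_eq_sum_range]
  push_cast
  refine sum_congr rfl fun i _ => ?_
  rw [sum_boole_card_eq i (fun y => y ⊆ z'.1 ∧ y ⊆ z.1)]
  simp_rw [← subset_inter_iff, card_filter_powersetCard_univ_subset]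

lemma det_inclusionMatrix_mul_transpose_ne_zero [CommRing R] [LinearOrder R]
    [IsStrictOrderedRing R] {t k : ℕ} (htk : t ≤ k) (hkt : k ≤ Fintype.card α - t) :
    (inclusionMatrix R α t k * (inclusionMatrix R α t k)ᵀ).det ≠ 0 := by
  rw [Ne, ← exists_mulVec_eq_zero_iff]
  rintro ⟨u, hu, hMu⟩
  set a : ℕ → R := fun i => ((Fintype.card α - 2 * t).choose (Fintype.card α - k - i) : R)
  set q : ℕ → R := fun i => a i *
    ((inclusionMatrix R α i t *ᵥ u) ⬝ᵥ (inclusionMatrix R α i t *ᵥ u))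
  have hquad : u ⬝ᵥ ((inclusionMatrix R α t k * (inclusionMatrix R α t k)ᵀ) *ᵥ u) =
      ∑ i ∈ range (Fintype.card α - k + 1), q i := by
    rw [inclusionMatrix_mul_transpose (by omega) (by omega), sum_mulVec, dotProduct_sum]
    simp_rw [dotProduct_mulVec_smul_transpose_mul_self]
    rfl
  have hq_nonneg (i : ℕ) : 0 ≤ q i :=
    mul_nonneg (Nat.cast_nonneg _) (sum_nonneg fun _ _ => mul_self_nonneg _)
  have hat : 0 < a t := Nat.cast_pos.mpr (Nat.choose_pos (by omega))
  have hqt : 0 < q t := by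
    simp only [q, inclusionMatrix_self, one_mulVec]
    exact mul_pos hat (lt_of_le_of_ne (sum_nonneg fun _ _ => mul_self_nonneg _)
        (Ne.symm (mt dotProduct_self_eq_zero.mp hu)))
  have ht : t ∈ range (Fintype.card α - k + 1) := mem_range.mpr (by omega)
  have hpos := hqt.trans_le (single_le_sum (fun i _ => hq_nonneg i) ht)
  rw [← hquad, hMu, dotProduct_zero] at hpos
  exact lt_irrefl _ hpos

end InclusionMatrix

/-- Graver–Jurkat: for `t ≤ l ≤ v - t`, the `ℤ`-module of null designs (functions `c`
on `l`-subsets of `{1,…,v}` all of whose sums over `l`-subsets containing a fixed set of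
size `≤ t` vanish) is free of rank `C(v,l) - C(v,t)`. -/
theorem null_designs_free_rank (v t l : ℕ) (htl : t ≤ l) (hlv : l ≤ v - t) :
    ∃ N : Submodule ℤ ({x : Finset (Fin v) // x.card = l} → ℤ),
      (N : Set ({x : Finset (Fin v) // x.card = l} → ℤ)) =
        {c | ∀ s ≤ t, ∀ y : Finset (Fin v), y.card = s →
          (∑ x : {x : Finset (Fin v) // x.card = l}, if y ⊆ x.1 then c x else 0) = 0} ∧
      Module.Free ℤ N ∧
      Module.finrank ℤ N = v.choose l - v.choose t := by
  refine ⟨LinearMap.ker (inclusionMatrix ℤ (Fin v) t l).mulVecLin, ?_, inferInstance, ?_⟩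
  · ext c
    simp only [SetLike.mem_coe, LinearMap.mem_ker, mulVecLin_apply, Set.mem_ofPred_eq]
    constructor
    · rintro hc s hs y rfl
      rw [← inclusionMatrix_mulVec_apply c ⟨y, rfl⟩]
      exact congrFun (inclusionMatrix_mulVec_eq_zero_of_le hs htl hc) _
    · intro h
      funext z
      exact (inclusionMatrix_mulVec_apply c z).trans (h t le_rfl z z.2)
  · rw [finrank_ker_mulVecLin_of_det_mul_transpose_ne_zero _
      (det_inclusionMatrix_mul_transpose_ne_zero htl (by rwa [Fintype.card_fin])),
      Fintype.card_finset_len, Fintype.card_finset_len, Fintype.card_fin]
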